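/- arXiv:2303.11518 — 3 statements merged into one kernel-verified Lean document; each statement's English description precedes it below -/
import Mathlib

section
/- Let M be symmetric positive definite and D⁻, D⁺ matrices with (D⁻)ᵀ M = -M D⁺, suppose (D⁻ u, u)_M ≥ 0 for all u, and let D₂ = D⁻ D⁺. If a > 0, c > 0, and uⁿ⁺¹ solves the implicit-explicit Euler step uⁿ⁺¹ = uⁿ - aΔt D⁻ uⁿ + cΔt D₂ uⁿ⁺¹ with time step Δt ≤ 2c/a², then ‖uⁿ⁺¹‖_M ≤ ‖uⁿ‖_M. -/
open Matrix

theorem stmt_10 {n : ℕ} (M Dm Dp : Matrix (Fin n) (Fin n) ℝ)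
    (hM : M.PosDef) (hMsym : M.IsSymm)
    (hSBP : Dmᵀ * M = -(M * Dp))
    (hdiss : ∀ u : Fin n → ℝ, 0 ≤ (Dm *ᵥ u) ⬝ᵥ (M *ᵥ u))
    (D2 : Matrix (Fin n) (Fin n) ℝ) (hD2 : D2 = Dm * Dp)
    (a c Δt : ℝ) (ha : 0 < a) (hc : 0 < c) (hΔt : 0 < Δt)
    (hstep : Δt ≤ 2 * c / a^2)
    (un un1 : Fin n → ℝ)
    (hscheme : un1 = un - (a * Δt) • (Dm *ᵥ un) + (c * Δt) • (D2 *ᵥ un1)) :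
    Real.sqrt (un1 ⬝ᵥ (M *ᵥ un1)) ≤ Real.sqrt (un ⬝ᵥ (M *ᵥ un)) := by
  have hMT : Mᵀ = M := hMsym
  -- symmetry of the bilinear form
  have hsym : ∀ u v : Fin n → ℝ, u ⬝ᵥ (M *ᵥ v) = v ⬝ᵥ (M *ᵥ u) := by
    intro u v
    rw [Matrix.dotProduct_mulVec, ← Matrix.mulVec_transpose, hMT, dotProduct_comm]
  -- SBP property for the form
  have hsbp : ∀ u v : Fin n → ℝ,
      (Dm *ᵥ u) ⬝ᵥ (M *ᵥ v) = -(u ⬝ᵥ (M *ᵥ (Dp *ᵥ v))) := by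
    intro u v
    have h1 : (Dm *ᵥ u) ⬝ᵥ (M *ᵥ v) = u ⬝ᵥ ((Dmᵀ * M) *ᵥ v) := by
      rw [← Matrix.vecMul_transpose, ← Matrix.dotProduct_mulVec, Matrix.mulVec_mulVec]
    rw [h1, hSBP, Matrix.neg_mulVec, dotProduct_neg, ← Matrix.mulVec_mulVec]
  -- nonnegativity of the form
  have hpos : ∀ u : Fin n → ℝ, 0 ≤ u ⬝ᵥ (M *ᵥ u) := fun u => by simpa using hM.posSemidef.dotProduct_mulVec_nonneg u
  set p : Fin n → ℝ := Dp *ᵥ un1 with hp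
  set δ : Fin n → ℝ := un1 - un with hδ
  have hδeq : δ = -((a * Δt) • (Dm *ᵥ un)) + (c * Δt) • (Dm *ᵥ p) := by
    rw [hδ, hscheme, hD2, hp, ← Matrix.mulVec_mulVec]
    abel
  -- scalar abbreviations
  set X : ℝ := un1 ⬝ᵥ (M *ᵥ un1) with hX
  set Y : ℝ := un ⬝ᵥ (M *ᵥ un) with hY
  -- identity: Y = X - 2 B(δ, un1) + B(δ, δ)
  have hun : un = un1 - δ := by rw [hδ]; abel
  have e1 : Y = X - 2 * (δ ⬝ᵥ (M *ᵥ un1)) + δ ⬝ᵥ (M *ᵥ δ) := by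
    rw [hY, hX, hun]
    have hs := hsym δ un1
    simp [sub_dotProduct, Matrix.mulVec_sub, dotProduct_sub]
    linarith [hsym un1 δ]
  -- B(δ, un1) = aΔt B(un, p) - cΔt B(p,p)
  have e2 : δ ⬝ᵥ (M *ᵥ un1)
      = a * Δt * (un ⬝ᵥ (M *ᵥ p)) - c * Δt * (p ⬝ᵥ (M *ᵥ p)) := by
    rw [hδeq]
    simp only [add_dotProduct, neg_dotProduct, smul_dotProduct,
      smul_eq_mul]
    rw [hsbp un un1, hsbp p un1]
    ring_nf
    rw [← hp]
  -- B(un1, p) ≤ 0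
  have e3 : un1 ⬝ᵥ (M *ᵥ p) ≤ 0 := by
    have := hsbp un1 un1
    have h2 := hdiss un1
    rw [← hp] at this
    linarith
  have e4 : un ⬝ᵥ (M *ᵥ p) = un1 ⬝ᵥ (M *ᵥ p) - δ ⬝ᵥ (M *ᵥ p) := by
    rw [hun]; simp [sub_dotProduct]
  -- PSD inequality: 0 ≤ B(δ + aΔt p, δ + aΔt p)
  have e5 : 0 ≤ δ ⬝ᵥ (M *ᵥ δ) + 2 * (a * Δt) * (δ ⬝ᵥ (M *ᵥ p))
      + (a * Δt)^2 * (p ⬝ᵥ (M *ᵥ p)) := by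
    have h := hpos (δ + (a * Δt) • p)
    have hsp := hsym p δ
    simp only [Matrix.mulVec_add, Matrix.mulVec_smul, add_dotProduct,
      dotProduct_add, smul_dotProduct, dotProduct_smul,
      smul_eq_mul] at h
    rw [hsp] at h
    linarith [h]
  -- step size condition
  have e6 : (a * Δt)^2 ≤ 2 * c * Δt := by
    have h1 : Δt * a^2 ≤ 2 * c := by
      rw [le_div_iff₀ (by positivity)] at hstep
      exact hstep
    nlinarith
  have hpp : 0 ≤ p ⬝ᵥ (M *ᵥ p) := hpos p
  have hXY : X ≤ Y := by
    have k1 : 0 ≤ (a * Δt) * (-(un1 ⬝ᵥ (M *ᵥ p))) :=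
      mul_nonneg (le_of_lt (mul_pos ha hΔt)) (neg_nonneg.mpr e3)
    have k2 : 0 ≤ (2 * c * Δt - (a * Δt)^2) * (p ⬝ᵥ (M *ᵥ p)) :=
      mul_nonneg (sub_nonneg.mpr e6) hpp
    have e2' : δ ⬝ᵥ (M *ᵥ un1) = a * Δt * (un1 ⬝ᵥ (M *ᵥ p))
        - a * Δt * (δ ⬝ᵥ (M *ᵥ p)) - c * Δt * (p ⬝ᵥ (M *ᵥ p)) := by
      rw [e2, e4]; ring
    linarith [e1, e2', e5, k1, k2]
  exact Real.sqrt_le_sqrt hXY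
end

section
/- Let M be symmetric positive definite, D⁺ a matrix, γ = 1 - √2/2, c > 0, and w₁, w₂ vectors. Then c·(γ‖D⁺w₁‖²_M + (1-2γ)(D⁺w₁, D⁺w₂)_M + γ‖D⁺w₂‖²_M) ≥ (cγ/4)(‖D⁺w₁‖²_M + ‖D⁺w₂‖²_M). -/
/-!
With `u = D⁺w₁`, `v = D⁺w₂`, write `a = ‖u‖²_M`, `d = ‖v‖²_M`, `b = (u, v)_M`. Expanding `‖u ± v‖²_M ≥ 0` gives
`2|b| ≤ a + d`, so the indefinite cross term costs at most `(1 - 2γ)(a + d)/2`. What is left,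
`(7γ/4 - 1/2)(a + d)`, is nonnegative exactly because `γ = 1 - √2/2 ≥ 2/7`.
-/

open Matrix

theorem Matrix.PosSemidef.two_mul_abs_dotProduct_mulVec_le {ι : Type*} [Fintype ι]
    {M : Matrix ι ι ℝ} (hM : M.PosSemidef) (x y : ι → ℝ) :
    2 * |x ⬝ᵥ (M *ᵥ y)| ≤ x ⬝ᵥ (M *ᵥ x) + y ⬝ᵥ (M *ᵥ y) := by
  have hsymm : y ⬝ᵥ (M *ᵥ x) = x ⬝ᵥ (M *ᵥ y) := by
    rw [← dotProduct_transpose_mulVec, isHermitian_iff_isSymm.mp hM.isHermitian]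
  have hplus := hM.dotProduct_mulVec_nonneg (x + y)
  have hminus := hM.dotProduct_mulVec_nonneg (x - y)
  simp only [star_trivial, mulVec_add, mulVec_sub, dotProduct_add, add_dotProduct,
    dotProduct_sub, sub_dotProduct, hsymm] at hplus hminus
  rcases abs_cases (x ⬝ᵥ (M *ᵥ y)) with ⟨habs, -⟩ | ⟨habs, -⟩ <;> linarith

theorem two_sevenths_le_one_sub_sqrt_two_div_two : (2 / 7 : ℝ) ≤ 1 - √2 / 2 := by
  have hsqrt : √2 ≤ 10 / 7 :=
    Real.sqrt_le_iff.mpr ⟨by norm_num, by norm_num⟩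
  linarith

theorem one_sub_sqrt_two_div_two_le_half : 1 - √2 / 2 ≤ (1 / 2 : ℝ) := by
  have hsqrt : 1 ≤ √2 := Real.one_le_sqrt.mpr (by norm_num)
  linarith

theorem div_four_mul_add_le_of_two_mul_abs_le {γ a b d : ℝ} (hγ : 2 / 7 ≤ γ) (hγ' : γ ≤ 1 / 2)
    (hb : 2 * |b| ≤ a + d) :
    γ / 4 * (a + d) ≤ γ * a + (1 - 2 * γ) * b + γ * d := by
  have hb' : -(a + d) ≤ 2 * b := by linarith [neg_abs_le b]
  linarith [mul_nonneg (by linarith : (0 : ℝ) ≤ 1 - 2 * γ) (by linarith : 0 ≤ a + d + 2 * b),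
    mul_nonneg (by linarith : (0 : ℝ) ≤ 7 * γ / 4 - 1 / 2) (by linarith [abs_nonneg b] : 0 ≤ a + d)]

theorem stmt_13_general {n : ℕ} (M Dp : Matrix (Fin n) (Fin n) ℝ)
    (hM : M.PosDef)
    (c : ℝ) (hc : 0 < c) (w1 w2 : Fin n → ℝ) :
    let γ : ℝ := 1 - Real.sqrt 2 / 2
    c * γ / 4 * ((Dp *ᵥ w1) ⬝ᵥ (M *ᵥ (Dp *ᵥ w1)) + (Dp *ᵥ w2) ⬝ᵥ (M *ᵥ (Dp *ᵥ w2)))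
      ≤ c * (γ * ((Dp *ᵥ w1) ⬝ᵥ (M *ᵥ (Dp *ᵥ w1)))
          + (1 - 2 * γ) * ((Dp *ᵥ w1) ⬝ᵥ (M *ᵥ (Dp *ᵥ w2)))
          + γ * ((Dp *ᵥ w2) ⬝ᵥ (M *ᵥ (Dp *ᵥ w2)))) := by
  intro γ
  have key := div_four_mul_add_le_of_two_mul_abs_le two_sevenths_le_one_sub_sqrt_two_div_two
    one_sub_sqrt_two_div_two_le_half (hM.posSemidef.two_mul_abs_dotProduct_mulVec_le
      (Dp *ᵥ w1) (Dp *ᵥ w2))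
  rw [mul_div_assoc, mul_assoc]
  exact mul_le_mul_of_nonneg_left key hc.le

theorem stmt_13 {n : ℕ} (M Dp : Matrix (Fin n) (Fin n) ℝ)
    (hM : M.PosDef) (hMsym : M.IsSymm)
    (c : ℝ) (hc : 0 < c) (w1 w2 : Fin n → ℝ) :
    let γ : ℝ := 1 - Real.sqrt 2 / 2
    c * γ / 4 * ((Dp *ᵥ w1) ⬝ᵥ (M *ᵥ (Dp *ᵥ w1)) + (Dp *ᵥ w2) ⬝ᵥ (M *ᵥ (Dp *ᵥ w2)))
      ≤ c * (γ * ((Dp *ᵥ w1) ⬝ᵥ (M *ᵥ (Dp *ᵥ w1)))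
          + (1 - 2 * γ) * ((Dp *ᵥ w1) ⬝ᵥ (M *ᵥ (Dp *ᵥ w2)))
          + γ * ((Dp *ᵥ w2) ⬝ᵥ (M *ᵥ (Dp *ᵥ w2)))) :=
  stmt_13_general M Dp hM c hc w1 w2
end

section
/- Let M, D⁻, D⁺, D₂ = D⁻D⁺ satisfy the periodic upwind gSBP properties ((D⁻)ᵀM = -MD⁺ and uᵀMD⁻u ≥ 0 for all u). Let γ = 1 - √2/2, δ = 1 - 1/(2γ), a, c > 0. If u⁽¹⁾ = uⁿ + Δtγ(-aD⁻uⁿ + cD₂u⁽¹⁾) and uⁿ⁺¹ = uⁿ - Δt(δaD⁻uⁿ + (1-δ)aD⁻u⁽¹⁾) + Δt((1-γ)cD₂u⁽¹⁾ + γcD₂uⁿ⁺¹), and Δt ≤ c/(11a²), then ‖uⁿ⁺¹‖_M ≤ ‖uⁿ‖_M. -/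
/-!
Write `⟨u, v⟩ = uᵀMv`, `α = Δt a`, `β = Δt c`. Expanding `‖uⁿ⁺¹‖² - ‖uⁿ‖²` through the stage
increments `u⁽¹⁾ - uⁿ`, `uⁿ⁺¹ - u⁽¹⁾` and moving `D⁻` across `⟨·, ·⟩` as `-D⁺` (summation by
parts) leaves: the upwind terms `⟨D⁺u⁽¹⁾, u⁽¹⁾⟩`, `⟨D⁺uⁿ⁺¹, uⁿ⁺¹⟩`, which are `≤ 0`; minus the
squares of the two increments, plus cross terms of order `α` that Young's inequality absorbs into
those squares at the price of `α²`-terms; and the diffusion `-β ⟨D⁺·, D⁺·⟩`. What is left is a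
quadratic form in `(D⁺u⁽¹⁾, D⁺uⁿ⁺¹)` whose `β`-part dominates its `α²`-part once `β ≥ 11 α²`.
-/

open Matrix

namespace LinearMap.BilinForm

variable {V : Type*} [AddCommGroup V] [Module ℝ V] {B : LinearMap.BilinForm ℝ V}

theorem IsSymm.apply_self_sub_apply_self (hB : B.IsSymm) (u v : V) :
    B v v - B u u = 2 * B v (v - u) - B (v - u) (v - u) := by
  simp only [map_sub, LinearMap.sub_apply]
  linear_combination hB.eq v u

theorem IsPosSemidef.neg_apply_self_sub_le (hB : B.IsPosSemidef) (t : ℝ) (v d : V) :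
    -B d d - 2 * t * B v d ≤ t ^ 2 * B v v := by
  have h := hB.isNonneg.nonneg (d + t • v)
  simp only [map_add, map_smul, LinearMap.add_apply, LinearMap.smul_apply, smul_eq_mul] at h
  linear_combination h + t * hB.isSymm.eq d v

theorem IsPosSemidef.quadratic_nonneg (hB : B.IsPosSemidef) {p q r : ℝ}
    (hq : 0 ≤ q) (hqp : q ≤ p) (hqr : q ≤ r) (x y : V) :
    0 ≤ p * B x x + 2 * q * B x y + r * B y y := by
  have h := hB.isNonneg.nonneg (x + y)
  simp only [map_add, LinearMap.add_apply] at h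
  linear_combination mul_nonneg hq h + mul_nonneg (sub_nonneg.2 hqp) (hB.isNonneg.nonneg x)
    + mul_nonneg (sub_nonneg.2 hqr) (hB.isNonneg.nonneg y) + q * hB.isSymm.eq y x

theorem IsSymm.apply_nonpos_of_sbp {Dm Dp : V → V} (hB : B.IsSymm)
    (hSBP : ∀ x y, B x (Dm y) = -B (Dp x) y) (hdiss : ∀ u, 0 ≤ B (Dm u) u) (u : V) :
    B (Dp u) u ≤ 0 := by
  have h := hdiss u
  rw [hB.eq, hSBP] at h
  linarith

end LinearMap.BilinForm

section IMEX

open LinearMap.BilinForm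

variable {V : Type*} [AddCommGroup V] [Module ℝ V] {B : LinearMap.BilinForm ℝ V}
  {Dm Dp : V → V} {α β γ δ : ℝ} {un u1 un1 : V}

/-- One step `uⁿ ↦ uⁿ⁺¹` of scheme (41) with internal stage `u⁽¹⁾`, written with `α = Δt a`,
`β = Δt c` and `D₂ = D⁻ ∘ D⁺`. -/
structure IsIMEXStep (Dm Dp : V → V) (α β γ δ : ℝ) (un u1 un1 : V) : Prop where
  stage : u1 = un - (γ * α) • Dm un + (γ * β) • Dm (Dp u1)
  final : un1 = un - (δ * α) • Dm un - ((1 - δ) * α) • Dm u1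
    + ((1 - γ) * β) • Dm (Dp u1) + (γ * β) • Dm (Dp un1)

theorem IsIMEXStep.apply_stage (h : IsIMEXStep Dm Dp α β γ δ un u1 un1)
    (hSBP : ∀ x y, B x (Dm y) = -B (Dp x) y) (w : V) :
    B w u1 = B w un + γ * α * B (Dp w) un - γ * β * B (Dp w) (Dp u1) := by
  conv_lhs => rw [h.stage]
  simp only [map_add, map_sub, map_smul, smul_eq_mul, hSBP]
  ring

theorem IsIMEXStep.apply_final (h : IsIMEXStep Dm Dp α β γ δ un u1 un1)
    (hSBP : ∀ x y, B x (Dm y) = -B (Dp x) y) (w : V) :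
    B w un1 = B w un + δ * α * B (Dp w) un + (1 - δ) * α * B (Dp w) u1
      - (1 - γ) * β * B (Dp w) (Dp u1) - γ * β * B (Dp w) (Dp un1) := by
  conv_lhs => rw [h.final]
  simp only [map_add, map_sub, map_smul, smul_eq_mul, hSBP]
  ring

theorem IsIMEXStep.energy_eq (h : IsIMEXStep Dm Dp α β γ δ un u1 un1) (hB : B.IsSymm)
    (hSBP : ∀ x y, B x (Dm y) = -B (Dp x) y) :
    B un1 un1 - B un un = 2 * γ * α * B (Dp u1) u1 + 2 * (1 - γ) * α * B (Dp un1) un1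
      + (-B (u1 - un) (u1 - un) - 2 * α * B (γ • Dp u1 - (γ - δ) • Dp un1) (u1 - un))
      + (-B (un1 - u1) (un1 - u1) - 2 * ((1 - γ) * α) * B (Dp un1) (un1 - u1))
      - 2 * β * (γ * B (Dp u1) (Dp u1) + (1 - 2 * γ) * B (Dp u1) (Dp un1)
        + γ * B (Dp un1) (Dp un1)) := by
  have e₁ := hB.apply_self_sub_apply_self un u1
  have e₂ := hB.apply_self_sub_apply_self u1 un1
  have s₁ := h.apply_stage hSBP u1
  have s₂ := h.apply_stage hSBP un1
  have f₂ := h.apply_final hSBP un1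
  simp only [map_sub, map_smul, LinearMap.sub_apply, LinearMap.smul_apply, smul_eq_mul]
    at e₁ e₂ ⊢
  linear_combination e₁ + e₂ + 2 * s₁ + 2 * f₂ - 2 * s₂
    + 2 * (1 - 2 * γ) * β * hB.eq (Dp u1) (Dp un1)

theorem IsIMEXStep.energy_le (h : IsIMEXStep Dm Dp α β γ δ un u1 un1) (hB : B.IsPosSemidef)
    (hSBP : ∀ x y, B x (Dm y) = -B (Dp x) y) (hdiss : ∀ u, 0 ≤ B (Dm u) u)
    (hγ₀ : 0 ≤ γ) (hγ₁ : γ ≤ 1) (hα : 0 ≤ α) :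
    B un1 un1 - B un un ≤ -((2 * γ * β - γ ^ 2 * α ^ 2) * B (Dp u1) (Dp u1)
      + 2 * ((1 - 2 * γ) * β + γ * (γ - δ) * α ^ 2) * B (Dp u1) (Dp un1)
      + (2 * γ * β - ((γ - δ) ^ 2 + (1 - γ) ^ 2) * α ^ 2) * B (Dp un1) (Dp un1)) := by
  set x := Dp u1
  set y := Dp un1
  have young₁ := hB.neg_apply_self_sub_le α (γ • x - (γ - δ) • y) (u1 - un)
  have young₂ := hB.neg_apply_self_sub_le ((1 - γ) * α) y (un1 - u1)
  have hv : B (γ • x - (γ - δ) • y) (γ • x - (γ - δ) • y)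
      = γ ^ 2 * B x x - 2 * γ * (γ - δ) * B x y + (γ - δ) ^ 2 * B y y := by
    simp only [map_sub, map_smul, LinearMap.sub_apply, LinearMap.smul_apply, smul_eq_mul]
    linear_combination γ * (γ - δ) * hB.isSymm.eq x y
  have diss₁ := mul_nonpos_of_nonneg_of_nonpos (mul_nonneg hγ₀ hα)
    (hB.isSymm.apply_nonpos_of_sbp hSBP hdiss u1)
  have diss₂ := mul_nonpos_of_nonneg_of_nonpos (mul_nonneg (sub_nonneg.2 hγ₁) hα)
    (hB.isSymm.apply_nonpos_of_sbp hSBP hdiss un1)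
  linear_combination h.energy_eq hB.isSymm hSBP + young₁ + young₂ + α ^ 2 * hv
    + 2 * diss₁ + 2 * diss₂

end IMEX

theorem Matrix.PosSemidef.isPosSemidef_toBilin' {ι : Type*} [Fintype ι] [DecidableEq ι]
    {M : Matrix ι ι ℝ} (hM : M.PosSemidef) : M.toBilin'.IsPosSemidef :=
  ⟨isSymm_toBilin'_iff_isSymm.2 (isHermitian_iff_isSymm.1 hM.isHermitian),
    ⟨fun x ↦ by simpa [toBilin'_apply'] using hM.dotProduct_mulVec_nonneg x⟩⟩

theorem Matrix.toBilin'_mulVec_right {ι R : Type*} [Fintype ι] [DecidableEq ι] [CommRing R]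
    {M Dm Dp : Matrix ι ι R} (hM : M.IsSymm) (hSBP : Dmᵀ * M = -(M * Dp)) (x y : ι → R) :
    M.toBilin' x (Dm *ᵥ y) = -M.toBilin' (Dp *ᵥ x) y := by
  rw [(isSymm_toBilin'_iff_isSymm.2 hM).eq, (isSymm_toBilin'_iff_isSymm.2 hM).eq _ y,
    toBilin'_apply', toBilin'_apply', dotProduct_comm, dotProduct_mulVec, ← mulVec_transpose,
    mulVec_mulVec, hSBP, neg_mulVec, ← mulVec_mulVec, neg_dotProduct, dotProduct_comm]

theorem sqrt_two_mem_Ioo : √2 ∈ Set.Ioo 1.414 1.4143 := by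
  constructor
  · rw [Real.lt_sqrt (by norm_num)]; norm_num
  · rw [Real.sqrt_lt' (by norm_num)]; norm_num

theorem sub_eq_one_of_sqrt_two {γ δ : ℝ} (hγ : γ = 1 - √2 / 2) (hδ : δ = 1 - 1 / (2 * γ)) :
    γ - δ = 1 := by
  have hγ₀ : γ ≠ 0 := by rw [hγ]; linarith [sqrt_two_mem_Ioo.2]
  rw [hδ]
  field_simp
  rw [hγ]
  linear_combination Real.sq_sqrt (zero_le_two : (0 : ℝ) ≤ 2) / 2

/-- The binding constraint is the last one: with `γ - δ = 1` it reads
`(3 - 2√2) β ≥ (5 - √2) α² / 2`, i.e. `β ≥ 10.45… α²`. -/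
theorem quadratic_coeffs_of_sqrt_two {γ δ α β : ℝ} (hγ : γ = 1 - √2 / 2) (hδ : δ = 1 - 1 / (2 * γ))
    (hβ : 11 * α ^ 2 ≤ β) :
    0 ≤ (1 - 2 * γ) * β + γ * (γ - δ) * α ^ 2 ∧
    (1 - 2 * γ) * β + γ * (γ - δ) * α ^ 2 ≤ 2 * γ * β - γ ^ 2 * α ^ 2 ∧
    (1 - 2 * γ) * β + γ * (γ - δ) * α ^ 2 ≤ 2 * γ * β - ((γ - δ) ^ 2 + (1 - γ) ^ 2) * α ^ 2 := by
  rw [sub_eq_one_of_sqrt_two hγ hδ, hγ]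
  obtain ⟨hs₁, hs₂⟩ := sqrt_two_mem_Ioo
  have hs : √2 ^ 2 = 2 := Real.sq_sqrt zero_le_two
  have hα := sq_nonneg α
  exact ⟨by nlinarith, by nlinarith, by nlinarith⟩

theorem stmt_14_general {n : ℕ} (M Dm Dp : Matrix (Fin n) (Fin n) ℝ)
    (hM : M.PosDef)
    (hSBP : Dmᵀ * M = -(M * Dp))
    (hdiss : ∀ u : Fin n → ℝ, 0 ≤ (Dm *ᵥ u) ⬝ᵥ (M *ᵥ u))
    (D2 : Matrix (Fin n) (Fin n) ℝ) (hD2 : D2 = Dm * Dp)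
    (γ δ : ℝ) (hγ : γ = 1 - Real.sqrt 2 / 2) (hδ : δ = 1 - 1 / (2 * γ))
    (a c Δt : ℝ) (ha : 0 < a) (hΔt : 0 < Δt)
    (hstep : Δt ≤ c / (11 * a^2))
    (un u1 un1 : Fin n → ℝ)
    (hstage : u1 = un + (Δt * γ) • (-(a • (Dm *ᵥ un)) + c • (D2 *ᵥ u1)))
    (hfinal : un1 = un - Δt • ((δ * a) • (Dm *ᵥ un) + ((1 - δ) * a) • (Dm *ᵥ u1))
        + Δt • (((1 - γ) * c) • (D2 *ᵥ u1) + (γ * c) • (D2 *ᵥ un1))) :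
    Real.sqrt (un1 ⬝ᵥ (M *ᵥ un1)) ≤ Real.sqrt (un ⬝ᵥ (M *ᵥ un)) := by
  have hB := hM.posSemidef.isPosSemidef_toBilin'
  have step : IsIMEXStep (Dm *ᵥ ·) (Dp *ᵥ ·) (Δt * a) (Δt * c) γ δ un u1 un1 := by
    simp only [hD2, ← mulVec_mulVec] at hstage hfinal
    exact ⟨hstage.trans (by module), hfinal.trans (by module)⟩
  have hγ₀ : 0 ≤ γ := by rw [hγ]; linarith [sqrt_two_mem_Ioo.2]
  have hγ₁ : γ ≤ 1 := by rw [hγ]; linarith [sqrt_two_mem_Ioo.1]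
  have hCFL : 11 * (Δt * a) ^ 2 ≤ Δt * c := by
    rw [le_div_iff₀ (by positivity)] at hstep
    nlinarith
  have henergy := step.energy_le hB
    (toBilin'_mulVec_right (isHermitian_iff_isSymm.1 hM.isHermitian) hSBP)
    (by simpa [toBilin'_apply'] using hdiss) hγ₀ hγ₁ (by positivity)
  obtain ⟨hQ, hQP, hQR⟩ := quadratic_coeffs_of_sqrt_two hγ hδ hCFL
  have hquad := hB.quadratic_nonneg hQ hQP hQR (Dp *ᵥ u1) (Dp *ᵥ un1)
  simpa only [toBilin'_apply'] using
    Real.sqrt_le_sqrt (show M.toBilin' un1 un1 ≤ M.toBilin' un un by linarith)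

theorem stmt_14 {n : ℕ} (M Dm Dp : Matrix (Fin n) (Fin n) ℝ)
    (hM : M.PosDef) (hMsym : M.IsSymm)
    (hSBP : Dmᵀ * M = -(M * Dp))
    (hdiss : ∀ u : Fin n → ℝ, 0 ≤ (Dm *ᵥ u) ⬝ᵥ (M *ᵥ u))
    (D2 : Matrix (Fin n) (Fin n) ℝ) (hD2 : D2 = Dm * Dp)
    (γ δ : ℝ) (hγ : γ = 1 - Real.sqrt 2 / 2) (hδ : δ = 1 - 1 / (2 * γ))
    (a c Δt : ℝ) (ha : 0 < a) (hc : 0 < c) (hΔt : 0 < Δt)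
    (hstep : Δt ≤ c / (11 * a^2))
    (un u1 un1 : Fin n → ℝ)
    (hstage : u1 = un + (Δt * γ) • (-(a • (Dm *ᵥ un)) + c • (D2 *ᵥ u1)))
    (hfinal : un1 = un - Δt • ((δ * a) • (Dm *ᵥ un) + ((1 - δ) * a) • (Dm *ᵥ u1))
        + Δt • (((1 - γ) * c) • (D2 *ᵥ u1) + (γ * c) • (D2 *ᵥ un1))) :
    Real.sqrt (un1 ⬝ᵥ (M *ᵥ un1)) ≤ Real.sqrt (un ⬝ᵥ (M *ᵥ un)) :=
  stmt_14_general M Dm Dp hM hSBP hdiss D2 hD2 γ δ hγ hδ a c Δt ha hΔt hstep un u1 un1 hstage hfinal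
end
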